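/- Let a : [0,1] → ℝ be weakly or strongly degenerate at 0. If y ∈ H¹(0,1) satisfies y(0) = y(1) = 0 and ∫₀¹ y(x)²/a(x) dx < ∞ (i.e. y ∈ H¹_{1/a}(0,1)), then lim_{x→0⁺} (x/a(x)) y(x)² = 0. -/

import Mathlib

open MeasureTheory Set Filter Topology

noncomputable section

/-- The set of quotients `x |a'(x)| / a(x)` for `x ∈ (0,1]`, whose supremum is the
degeneracy constant `K`. -/
def DegenSet (a a' : ℝ → ℝ) : Set ℝ :=
  {r : ℝ | ∃ x ∈ Set.Ioc (0:ℝ) 1, r = x * |a' x| / a x}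

/-- `a` is weakly degenerate at `0` with constant `K`: `a ∈ C[0,1] ∩ C¹(0,1]`, `a(0) = 0`,
`a > 0` on `(0,1]`, and `K = sup_{x ∈ (0,1]} x|a'(x)|/a(x) ∈ (0,1)`. -/
def WeaklyDegenerate (a a' : ℝ → ℝ) (K : ℝ) : Prop :=
  ContinuousOn a (Set.Icc 0 1) ∧
  (∀ x ∈ Set.Ioc (0:ℝ) 1, HasDerivWithinAt a (a' x) (Set.Icc 0 1) x) ∧
  ContinuousOn a' (Set.Ioc 0 1) ∧
  a 0 = 0 ∧ (∀ x ∈ Set.Ioc (0:ℝ) 1, 0 < a x) ∧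
  K = sSup (DegenSet a a') ∧ 0 < K ∧ K < 1

/-- `a` is strongly degenerate at `0` with constant `K`: `a ∈ C¹[0,1]`, `a(0) = 0`,
`a > 0` on `(0,1]`, and `K = sup_{x ∈ (0,1]} x|a'(x)|/a(x) ∈ [1,2)`. -/
def StronglyDegenerate (a a' : ℝ → ℝ) (K : ℝ) : Prop :=
  (∀ x ∈ Set.Icc (0:ℝ) 1, HasDerivWithinAt a (a' x) (Set.Icc 0 1) x) ∧
  ContinuousOn a' (Set.Icc 0 1) ∧
  a 0 = 0 ∧ (∀ x ∈ Set.Ioc (0:ℝ) 1, 0 < a x) ∧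
  K = sSup (DegenSet a a') ∧ 1 ≤ K ∧ K < 2

/-- `a` is weakly or strongly degenerate at `0` with constant `K`. -/
def Degenerate (a a' : ℝ → ℝ) (K : ℝ) : Prop :=
  WeaklyDegenerate a a' K ∨ StronglyDegenerate a a' K

/-- `u ∈ H¹_{1/a}(0,1)`: `u` is absolutely continuous on `[0,1]` with derivative `u' ∈ L²(0,1)`,
`u(0) = u(1) = 0`, and `∫₀¹ u²/a < ∞`. -/
def MemH1w (a u u' : ℝ → ℝ) : Prop :=
  IntervalIntegrable u' MeasureTheory.volume 0 1 ∧
  MeasureTheory.IntegrableOn (fun x => u' x ^ 2) (Set.Ioc 0 1) ∧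
  (∀ x ∈ Set.Icc (0:ℝ) 1, u x = u 0 + ∫ s in (0:ℝ)..x, u' s) ∧
  u 0 = 0 ∧ u 1 = 0 ∧
  MeasureTheory.IntegrableOn (fun x => u x ^ 2 / a x) (Set.Ioc 0 1)

/-- If `a` is weakly or strongly degenerate at `0` and `y ∈ H¹_{1/a}(0,1)`, then
`lim_{x→0⁺} (x / a(x)) y(x)² = 0`. -/
theorem tendsto_boundary_term (a a' : ℝ → ℝ) (K : ℝ) (h : Degenerate a a' K)
    (y y' : ℝ → ℝ) (hy : MemH1w a y y') :
    Filter.Tendsto (fun x => x / a x * (y x) ^ 2)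
      (nhdsWithin 0 (Set.Ioi 0)) (nhds 0) := by
  -- Extract common data from the degeneracy hypothesis.
  have hcont : ContinuousOn a (Set.Icc 0 1) := by
    rcases h with hw | hs
    · exact hw.1
    · exact fun x hx => (hs.1 x hx).continuousWithinAt
  have hpos : ∀ x ∈ Set.Ioc (0:ℝ) 1, 0 < a x := by
    rcases h with hw | hs
    exacts [hw.2.2.2.2.1, hs.2.2.2.1]
  have hKs : K = sSup (DegenSet a a') := by
    rcases h with hw | hs
    exacts [hw.2.2.2.2.2.1, hs.2.2.2.2.1]
  have hK0 : 0 < K := by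
    rcases h with hw | hs
    exacts [hw.2.2.2.2.2.2.1, lt_of_lt_of_le one_pos hs.2.2.2.2.2.1]
  have hK2 : K < 2 := by
    rcases h with hw | hs
    exacts [lt_trans hw.2.2.2.2.2.2.2 one_lt_two, hs.2.2.2.2.2.2]
  have hderiv : ∀ x ∈ Set.Ioo (0:ℝ) 1, HasDerivAt a (a' x) x := by
    intro x hx
    have hmem : Set.Icc (0:ℝ) 1 ∈ 𝓝 x := Icc_mem_nhds hx.1 hx.2
    rcases h with hw | hs
    · exact (hw.2.1 x ⟨hx.1, hx.2.le⟩).hasDerivAt hmem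
    · exact (hs.1 x ⟨hx.1.le, hx.2.le⟩).hasDerivAt hmem
  have ha1 : 0 < a 1 := hpos 1 ⟨one_pos, le_refl 1⟩
  -- The bound `x |a'(x)| ≤ K a(x)` on `(0,1]`.
  have hbddA : BddAbove (DegenSet a a') := by
    by_contra hb
    rw [csSup_of_not_bddAbove hb, Real.sSup_empty] at hKs
    exact absurd hKs (ne_of_gt hK0)
  have hbd : ∀ x ∈ Set.Ioc (0:ℝ) 1, x * |a' x| ≤ K * a x := by
    intro x hx
    have hax := hpos x hx
    have : x * |a' x| / a x ≤ K := by
      rw [hKs]; exact le_csSup hbddA ⟨x, hx, rfl⟩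
    calc x * |a' x| = x * |a' x| / a x * a x := by field_simp
    _ ≤ K * a x := by gcongr
  -- Lower bound `a(x) ≥ a(1) x^K` on `(0,1]`.
  have hlow : ∀ x ∈ Set.Ioc (0:ℝ) 1, a 1 * x ^ K ≤ a x := by
    intro x hx
    rcases eq_or_lt_of_le hx.2 with h1 | h1
    · rw [h1]; simp
    set f : ℝ → ℝ := fun z => Real.log (a z) - K * Real.log z with hf
    have hanti : AntitoneOn f (Set.Icc x 1) := by
      have hsub : Set.Icc x 1 ⊆ Set.Ioc (0:ℝ) 1 := fun z hz => ⟨lt_of_lt_of_le hx.1 hz.1, hz.2⟩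
      have hdf : ∀ z ∈ interior (Set.Icc x 1),
          HasDerivAt f (a' z / a z - K * z⁻¹) z := by
        intro z hz
        rw [interior_Icc] at hz
        have hz0 : 0 < z := lt_trans hx.1 hz.1
        have haz : 0 < a z := hpos z ⟨hz0, hz.2.le⟩
        have h1 : HasDerivAt (fun w => Real.log (a w)) (a' z / a z) z :=
          (hderiv z ⟨hz0, hz.2⟩).log haz.ne'
        have h2 : HasDerivAt (fun w => K * Real.log w) (K * z⁻¹) z :=
          (Real.hasDerivAt_log hz0.ne').const_mul K
        exact h1.sub h2
      apply antitoneOn_of_deriv_nonpos (convex_Icc x 1)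
      · apply ContinuousOn.sub
        · exact ContinuousOn.log (hcont.mono fun z hz => ⟨(hsub hz).1.le, hz.2⟩)
            (fun z hz => (hpos z (hsub hz)).ne')
        · exact continuousOn_const.mul
            (Real.continuousOn_log.mono fun z hz => ne_of_gt (lt_of_lt_of_le hx.1 hz.1))
      · exact fun z hz => (hdf z hz).differentiableAt.differentiableWithinAt
      · intro z hz
        rw [(hdf z hz).deriv]
        rw [interior_Icc] at hz
        have hz0 : 0 < z := lt_trans hx.1 hz.1
        have haz : 0 < a z := hpos z ⟨hz0, hz.2.le⟩
        have hb := hbd z ⟨hz0, hz.2.le⟩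
        have hle : a' z ≤ |a' z| := le_abs_self _
        have hzi : z * z⁻¹ = 1 := mul_inv_cancel₀ hz0.ne'
        rw [sub_nonpos, div_le_iff₀ haz]
        have h5 : z * a' z ≤ K * a z :=
          le_trans (mul_le_mul_of_nonneg_left hle hz0.le) hb
        calc a' z = z⁻¹ * (z * a' z) := by field_simp
          _ ≤ z⁻¹ * (K * a z) := by
              exact mul_le_mul_of_nonneg_left h5 (inv_nonneg.mpr hz0.le)
          _ = K * z⁻¹ * a z := by ring
    have hfle : f 1 ≤ f x := hanti ⟨le_refl x, hx.2⟩ ⟨hx.2, le_refl 1⟩ hx.2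
    have hxK : 0 < x ^ K := Real.rpow_pos_of_pos hx.1 K
    have hlog : Real.log (a 1 * x ^ K) ≤ Real.log (a x) := by
      rw [Real.log_mul ha1.ne' hxK.ne', Real.log_rpow hx.1]
      simp only [hf, Real.log_one, mul_zero, sub_zero] at hfle
      linarith
    calc a 1 * x ^ K = Real.exp (Real.log (a 1 * x ^ K)) :=
          (Real.exp_log (mul_pos ha1 hxK)).symm
      _ ≤ Real.exp (Real.log (a x)) := Real.exp_le_exp.mpr hlog
      _ = a x := Real.exp_log (hpos x hx)
  -- The quantitative bound `y(x)² ≤ C' x`.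
  set C : ℝ := ∫ s in Set.Ioc (0:ℝ) 1, y' s ^ 2 with hCdef
  have hC : 0 ≤ C := setIntegral_nonneg measurableSet_Ioc fun s _ => sq_nonneg _
  set C' : ℝ := C + 1 with hC'def
  have hC' : 0 < C' := by positivity
  have hy2 : ∀ x ∈ Set.Ioc (0:ℝ) 1, y x ^ 2 ≤ C' * x := by
    intro x hx
    have hx0 : 0 < x := hx.1
    set t : ℝ := Real.sqrt (C' / x) with ht
    have ht0 : 0 < t := Real.sqrt_pos.mpr (div_pos hC' hx0)
    have hyx : y x = ∫ s in (0:ℝ)..x, y' s := by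
      rw [hy.2.2.1 x ⟨hx0.le, hx.2⟩, hy.2.2.2.1, zero_add]
    have hint1 : IntervalIntegrable y' volume 0 x :=
      hy.1.mono_set (by rw [Set.uIcc_of_le hx0.le, Set.uIcc_of_le zero_le_one]
                        exact Set.Icc_subset_Icc_right hx.2)
    have hint2 : IntervalIntegrable (fun s => y' s ^ 2) volume 0 x := by
      rw [intervalIntegrable_iff_integrableOn_Ioc_of_le hx0.le]
      exact hy.2.1.mono_set (Set.Ioc_subset_Ioc_right hx.2)
    have habs : |y x| ≤ ∫ s in (0:ℝ)..x, |y' s| := by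
      rw [hyx]; exact intervalIntegral.abs_integral_le_integral_abs hx0.le
    have hpt : ∀ s ∈ Set.Icc (0:ℝ) x, |y' s| ≤ t / 2 + y' s ^ 2 / (2 * t) := by
      intro s _
      have h2t : (0:ℝ) < 2 * t := by positivity
      have hdm : y' s ^ 2 / (2 * t) * (2 * t) = y' s ^ 2 := div_mul_cancel₀ _ h2t.ne'
      nlinarith [sq_nonneg (|y' s| - t), sq_abs (y' s), abs_nonneg (y' s)]
    have hmono : (∫ s in (0:ℝ)..x, |y' s|) ≤ ∫ s in (0:ℝ)..x, (t / 2 + y' s ^ 2 / (2 * t)) :=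
      intervalIntegral.integral_mono_on hx0.le hint1.abs
        (intervalIntegrable_const.add (hint2.div_const (2 * t))) hpt
    have hIle : (∫ s in (0:ℝ)..x, y' s ^ 2) ≤ C := by
      rw [intervalIntegral.integral_of_le hx0.le, hCdef]
      exact setIntegral_mono_set hy.2.1 (ae_of_all _ fun s => sq_nonneg _)
        (HasSubset.Subset.eventuallyLE (Set.Ioc_subset_Ioc_right hx.2))
    have hInn : (0:ℝ) ≤ ∫ s in (0:ℝ)..x, y' s ^ 2 := by
      rw [intervalIntegral.integral_of_le hx0.le]
      exact setIntegral_nonneg measurableSet_Ioc fun s _ => sq_nonneg _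
    have heq : (∫ s in (0:ℝ)..x, (t / 2 + y' s ^ 2 / (2 * t)))
        = t / 2 * x + (∫ s in (0:ℝ)..x, y' s ^ 2) / (2 * t) := by
      rw [intervalIntegral.integral_add intervalIntegrable_const (hint2.div_const _),
        intervalIntegral.integral_const, intervalIntegral.integral_div]
      simp [mul_comm]
    -- key algebraic identities
    have htx : t * x = Real.sqrt (C' * x) := by
      rw [ht]
      rw [show C' * x = C' / x * x ^ 2 by field_simp]
      rw [Real.sqrt_mul (div_pos hC' hx0).le, Real.sqrt_sq hx0.le]
    have hCt : C' / t = Real.sqrt (C' * x) := by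
      rw [ht, show C' = Real.sqrt (C' ^ 2) from (Real.sqrt_sq hC'.le).symm]
      rw [← Real.sqrt_div (sq_nonneg C')]
      congr 1
      field_simp
      ring_nf
      rw [Real.sq_sqrt (sq_nonneg C')]
    have hfin : |y x| ≤ Real.sqrt (C' * x) := by
      have h1 : |y x| ≤ t / 2 * x + (∫ s in (0:ℝ)..x, y' s ^ 2) / (2 * t) := by
        rw [← heq]; exact habs.trans hmono
      have h2 : (∫ s in (0:ℝ)..x, y' s ^ 2) / (2 * t) ≤ C' / (2 * t) := by
        apply div_le_div_of_nonneg_right ?_ (by positivity)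
        · exact hIle.trans (by linarith)
      have h3 : t / 2 * x + C' / (2 * t) = Real.sqrt (C' * x) := by
        have : t / 2 * x = t * x / 2 := by ring
        rw [this, htx, show C' / (2 * t) = C' / t / 2 by ring, hCt]
        ring
      linarith
    calc y x ^ 2 = |y x| ^ 2 := (sq_abs _).symm
      _ ≤ Real.sqrt (C' * x) ^ 2 := by
          apply pow_le_pow_left₀ (abs_nonneg _) hfin
      _ = C' * x := Real.sq_sqrt (by positivity)
  -- Upper bound for the boundary term.
  have hub : ∀ x ∈ Set.Ioc (0:ℝ) 1, x / a x * y x ^ 2 ≤ C' / a 1 * x ^ (2 - K) := by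
    intro x hx
    have hx0 : 0 < x := hx.1
    have hax : 0 < a x := hpos x hx
    have hxK : 0 < x ^ K := Real.rpow_pos_of_pos hx0 K
    have h1 : x / a x * y x ^ 2 ≤ x / a x * (C' * x) :=
      mul_le_mul_of_nonneg_left (hy2 x hx) (by positivity)
    have h2 : x / a x * (C' * x) = C' * (x ^ (2:ℝ) / a x) := by
      rw [show x ^ (2:ℝ) = x ^ (2:ℕ) from Real.rpow_natCast x 2]
      field_simp
    have h3 : x ^ (2:ℝ) / a x ≤ x ^ (2:ℝ) / (a 1 * x ^ K) :=
      div_le_div_of_nonneg_left (Real.rpow_pos_of_pos hx0 2).le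
        (mul_pos ha1 hxK) (hlow x hx)
    have h4 : x ^ (2:ℝ) / (a 1 * x ^ K) = x ^ (2 - K) / a 1 := by
      rw [Real.rpow_sub hx0]
      field_simp
    calc x / a x * y x ^ 2 ≤ C' * (x ^ (2:ℝ) / a x) := by rw [← h2]; exact h1
      _ ≤ C' * (x ^ (2 - K) / a 1) := by
          rw [← h4]; exact mul_le_mul_of_nonneg_left h3 hC'.le
      _ = C' / a 1 * x ^ (2 - K) := by ring
  -- The upper bound tends to zero.
  have hg : Tendsto (fun x : ℝ => C' / a 1 * x ^ (2 - K)) (𝓝[>] (0:ℝ)) (𝓝 0) := by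
    have h2K : (0:ℝ) < 2 - K := by linarith
    have hc : ContinuousAt (fun x : ℝ => x ^ (2 - K)) 0 :=
      Real.continuousAt_rpow_const 0 (2 - K) (Or.inr h2K.le)
    have h0 : (0:ℝ) ^ (2 - K) = 0 := Real.zero_rpow h2K.ne'
    have := (hc.tendsto.mono_left nhdsWithin_le_nhds :
      Tendsto (fun x : ℝ => x ^ (2 - K)) (𝓝[>] (0:ℝ)) (𝓝 ((0:ℝ) ^ (2 - K))))
    rw [h0] at this
    simpa using this.const_mul (C' / a 1)
  -- Squeeze.
  have hmem : Set.Ioc (0:ℝ) 1 ∈ 𝓝[>] (0:ℝ) :=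
    Ioc_mem_nhdsGT_of_mem ⟨le_refl 0, one_pos⟩
  apply tendsto_of_tendsto_of_tendsto_of_le_of_le' tendsto_const_nhds hg
  · filter_upwards [hmem] with x hx
    have hx0 : (0:ℝ) < x := hx.1
    have hax := hpos x hx
    positivity
  · filter_upwards [hmem] with x hx
    exact hub x hx
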